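/- Let (A_i)_{i∈κ} be infinite Boolean algebras with π(A_i) = λ_i ≤ λ for all i, D an ultrafilter on κ, and A = ∏ A_i / D. Assume every f ∈ ∏_{i∈κ} λ_i is bounded modulo D by some α < λ, and that θ^κ ≤ λ for every cardinal θ < λ. Then |∏_{i∈κ} λ_i / D| ≤ λ. -/

import Mathlib

open Cardinal

universe u v

/-- The algebraic density `π A` of a Boolean algebra: the least cardinality of a
dense subset of `A \ {⊥}`. -/
noncomputable def piDensity (A : Type v) [BooleanAlgebra A] : Cardinal.{v} :=
  sInf {c | ∃ X : Set A, (∀ x ∈ X, x ≠ ⊥) ∧ (∀ a : A, a ≠ ⊥ → ∃ x ∈ X, x ≤ a) ∧ c = #X}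

section BUP

variable {ι : Type u} (D : Ultrafilter ι) (A : ι → Type u) [∀ i, BooleanAlgebra (A i)]

instance piBooleanRing : BooleanRing (∀ i, AsBoolRing (A i)) :=
  { Pi.ring with isIdempotentElem := fun f => funext fun i => BooleanRing.mul_self (a := f i) }

/-- The ideal of elements vanishing `D`-almost everywhere. -/
def upIdeal : Ideal (∀ i, AsBoolRing (A i)) where
  carrier := {f | {i | f i = 0} ∈ D}
  zero_mem' := by
    have : {i | (0 : ∀ i, AsBoolRing (A i)) i = 0} = Set.univ := by ext i; simp
    simp only [Set.mem_setOf_eq] at *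
    exact this ▸ Filter.univ_mem
  add_mem' := by
    intro f g hf hg
    filter_upwards [hf, hg] with i h1 h2
    simp only [Pi.add_apply, h1, h2, add_zero]
  smul_mem' := by
    intro c f hf
    filter_upwards [hf] with i h1
    simp only [smul_eq_mul, Pi.mul_apply, h1, mul_zero]

instance upQuotBooleanRing : BooleanRing ((∀ i, AsBoolRing (A i)) ⧸ upIdeal D A) :=
  { (inferInstance : CommRing ((∀ i, AsBoolRing (A i)) ⧸ upIdeal D A)) with
    isIdempotentElem := fun a => by
      obtain ⟨f, rfl⟩ := Ideal.Quotient.mk_surjective a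
      rw [IsIdempotentElem, ← map_mul, BooleanRing.mul_self] }

/-- The Boolean ultraproduct `∏ᵢ Aᵢ / D`. -/
def BUP : Type u := AsBoolAlg ((∀ i, AsBoolRing (A i)) ⧸ upIdeal D A)

noncomputable instance : BooleanAlgebra (BUP D A) :=
  inferInstanceAs (BooleanAlgebra (AsBoolAlg _))

end BUP

section cardUP

variable {ι : Type u} (D : Ultrafilter ι)

/-- Set-theoretic ultraproduct of a family of cardinals, seen as the quotient of the
product of the corresponding sets of ordinals by `D`-almost-everywhere equality. -/
def cardSetoid (lam : ι → Cardinal.{u}) :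
    Setoid (∀ i, (lam i).ord.ToType) where
  r f g := {i | f i = g i} ∈ D
  iseqv := by
    refine ⟨fun f => by
      have : {i | f i = f i} = Set.univ := by ext i; simp
      rw [this]; exact Filter.univ_mem, fun {f g} h => ?_, fun {f g h} h1 h2 => ?_⟩
    · filter_upwards [h] with i hi using hi.symm
    · filter_upwards [h1, h2] with i hi1 hi2 using hi1.trans hi2

/-- The cardinality of the ultraproduct `∏ᵢ λᵢ / D` of a family of cardinals. -/
noncomputable def cardUP (lam : ι → Cardinal.{u}) : Cardinal.{u} :=
  #(Quotient (cardSetoid D lam))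

end cardUP

/-! A dense set `X` of an infinite Boolean algebra `A` is infinite, since `a ↦ {x ∈ X | x ≤ a}`
embeds `A` into `𝒫 X`; hence `λ ≥ π(Aᵢ)` is infinite. Every class of `∏ λᵢ / D` has a
representative bounded modulo `D` by some `α < λ`, and truncating it at `α` changes it only off a
set in `D`, so the classes bounded by `α` inject into `(α + 1) ^ κ`, of size `≤ λ` by the
hypothesis on powers. Taking the union over the `λ` many `α` gives `|∏ λᵢ / D| ≤ λ · λ = λ`. -/

section Density

variable {A : Type v} [BooleanAlgebra A] {X : Set A}

theorem le_of_forall_dense_le (hX0 : ∀ x ∈ X, x ≠ ⊥) (hXd : ∀ a : A, a ≠ ⊥ → ∃ x ∈ X, x ≤ a)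
    {a b : A} (h : ∀ x ∈ X, x ≤ a → x ≤ b) : a ≤ b := by
  by_contra hab
  obtain ⟨x, hxX, hx⟩ := hXd (a \ b) fun h0 => hab (sdiff_eq_bot_iff.mp h0)
  have hxb : x ≤ b := h x hxX (hx.trans sdiff_le)
  exact hX0 x hxX (disjoint_self.mp (disjoint_sdiff_self_right.mono hxb hx))

theorem injective_setOf_dense_le (hX0 : ∀ x ∈ X, x ≠ ⊥)
    (hXd : ∀ a : A, a ≠ ⊥ → ∃ x ∈ X, x ≤ a) :
    Function.Injective fun a : A => {x : X | (x : A) ≤ a} := by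
  intro a b hab
  have hsub (a b : A) (h : {x : X | (x : A) ≤ a} = {x : X | (x : A) ≤ b}) : a ≤ b :=
    le_of_forall_dense_le hX0 hXd fun x hx hxa => (Set.ext_iff.mp h ⟨x, hx⟩).mp hxa
  exact le_antisymm (hsub a b hab) (hsub b a hab.symm)

theorem infinite_of_dense [Infinite A] (hX0 : ∀ x ∈ X, x ≠ ⊥)
    (hXd : ∀ a : A, a ≠ ⊥ → ∃ x ∈ X, x ≤ a) : Infinite X := by
  by_contra hfin
  have : Finite X := not_infinite_iff_finite.mp hfin
  have : Finite A := Finite.of_injective _ (injective_setOf_dense_le hX0 hXd)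
  exact not_finite A

theorem aleph0_le_piDensity (A : Type v) [BooleanAlgebra A] [Infinite A] :
    ℵ₀ ≤ piDensity A := by
  refine le_csInf ⟨_, {a | a ≠ ⊥}, fun _ ha => ha, fun a ha => ⟨a, ha, le_rfl⟩, rfl⟩ ?_
  rintro _ ⟨X, hX0, hXd, rfl⟩
  exact infinite_iff.mp (infinite_of_dense hX0 hXd)

end Density

section Ultraproduct

variable {ι : Type u} (D : Ultrafilter ι) (lam : ι → Cardinal.{u})

def boundedClasses (α : Ordinal.{u}) : Set (Quotient (cardSetoid D lam)) :=
  {q | ∃ f, ⟦f⟧ = q ∧ {i | (f i : Ordinal) ≤ α} ∈ D}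

theorem lift_mk_boundedClasses_le (α : Ordinal.{u}) :
    lift.{u + 1} #(boundedClasses D lam α) ≤ #(ι → Set.Iic α) := by
  choose f hf hD using fun q : boundedClasses D lam α => q.2
  have hinj : Function.Injective fun q i =>
      (⟨min (f q i : Ordinal) α, Set.mem_Iic.mpr (min_le_right _ _)⟩ : Set.Iic α) := by
    intro q q' h
    refine Subtype.ext ?_
    rw [← hf q, ← hf q']
    refine Quotient.sound ?_
    filter_upwards [hD q, hD q'] with i hq hq'
    have hval := congrArg Subtype.val (congrFun h i)
    simp only [min_eq_left hq, min_eq_left hq'] at hval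
    exact Ordinal.ToType.mk.symm.injective (Subtype.ext hval)
  exact (lift_mk_le_lift_mk_of_injective hinj).trans_eq (lift_id'.{u, u + 1} _)

theorem iUnion_boundedClasses {μ : Cardinal.{u}}
    (hbd : ∀ f : ι → Ordinal.{u}, (∀ i, f i < (lam i).ord) → ∃ α < μ.ord, {i | f i ≤ α} ∈ D) :
    ⋃ α : Set.Iio μ.ord, boundedClasses D lam α = Set.univ := by
  refine Set.eq_univ_of_forall fun q => ?_
  induction q using Quotient.inductionOn with
  | h f =>
    obtain ⟨α, hα, hD⟩ := hbd (fun i => f i) fun i => (Ordinal.ToType.toOrd (f i)).2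
    exact Set.mem_iUnion.mpr ⟨⟨α, hα⟩, f, rfl, hD⟩

end Ultraproduct

theorem mk_arrow_Iic_le {ι : Type u} {μ : Cardinal.{u}} (hμ : ℵ₀ ≤ μ)
    (hpow : ∀ θ : Cardinal.{u}, θ < μ → θ ^ #ι ≤ μ) {α : Ordinal.{u}} (hα : α < μ.ord) :
    #(ι → Set.Iic α) ≤ lift.{u + 1} μ := by
  have hIic : #(Set.Iic α) = lift.{u + 1} (α.card + 1) := by
    rw [← Order.Iio_succ, Order.succ_eq_add_one, mk_Iio_ordinal, Ordinal.card_add_one]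
  have hθ : α.card + 1 < μ :=
    add_lt_of_lt hμ (lt_ord.mp hα) (one_lt_aleph0.trans_le hμ)
  calc #(ι → Set.Iic α) = lift.{u + 1} ((α.card + 1) ^ #ι) := by
        rw [mk_arrow, hIic, lift_lift, lift_power]
    _ ≤ lift.{u + 1} μ := lift_le.mpr (hpow _ hθ)

theorem cardUP_le_of_forall_bounded {ι : Type u} (D : Ultrafilter ι) (lam : ι → Cardinal.{u})
    {μ : Cardinal.{u}} (hμ : ℵ₀ ≤ μ)
    (hbd : ∀ f : ι → Ordinal.{u}, (∀ i, f i < (lam i).ord) → ∃ α < μ.ord, {i | f i ≤ α} ∈ D)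
    (hpow : ∀ θ : Cardinal.{u}, θ < μ → θ ^ #ι ≤ μ) :
    cardUP D lam ≤ μ := by
  rw [← lift_le.{u + 1}, cardUP, ← mk_univ, ← iUnion_boundedClasses D lam hbd]
  calc lift.{u + 1} #(⋃ α : Set.Iio μ.ord, boundedClasses D lam α)
      ≤ lift.{u} #(Set.Iio μ.ord) * ⨆ α : Set.Iio μ.ord, lift.{u + 1} #(boundedClasses D lam α) :=
        mk_iUnion_le_lift _
    _ ≤ lift.{u + 1} μ * lift.{u + 1} μ := by
        gcongr
        · simp
        · exact ciSup_le' fun α => (lift_mk_boundedClasses_le D lam α).trans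
            (mk_arrow_Iic_le hμ hpow α.2)
    _ = lift.{u + 1} μ := mul_eq_self (aleph0_le_lift.mpr hμ)

/-- Claim 5 / Claim 1 of Theorem 1.1: if each `f ∈ ∏ᵢ λᵢ` (`λᵢ = π Aᵢ ≤ lam`) is bounded
modulo `D` below `lam`, and `θ ^ κ ≤ lam` for all `θ < lam`, then `|∏ λᵢ / D| ≤ lam`. -/
theorem cardUP_le_of_bounded {ι : Type u} (D : Ultrafilter ι) (A : ι → Type u)
    [∀ i, BooleanAlgebra (A i)] [∀ i, Infinite (A i)] (lam : Cardinal.{u})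
    (hle : ∀ i, piDensity (A i) ≤ lam)
    (hbd : ∀ f : ι → Ordinal.{u}, (∀ i, f i < (piDensity (A i)).ord) →
      ∃ α < lam.ord, {i | f i ≤ α} ∈ D)
    (hpow : ∀ θ : Cardinal.{u}, θ < lam → θ ^ #ι ≤ lam) :
    cardUP D (fun i => piDensity (A i)) ≤ lam := by
  obtain ⟨i₀⟩ := Filter.nonempty_of_neBot (D : Filter ι)
  exact cardUP_le_of_forall_bounded D _ ((aleph0_le_piDensity (A i₀)).trans (hle i₀)) hbd hpow
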